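/- arXiv:2306.16065 — 2 statements merged into one kernel-verified Lean document; each statement's English description precedes it below -/
import Mathlib

section
/- Let x be a sequence of length n and let i, j ∈ {1,…,n−1} with i ≠ j. Then NG(x,i) ∩ NG(x,j) = ∅; consequently |NG(x)| = Σ_{i=1}^{n−1} |NG(x,i)|. -/
/-- A sequence of length `n`: a function `ℕ → ℤ` injective on positions `1,…,n`. -/
def IsSeq (n : ℕ) (x : ℕ → ℤ) : Prop := Set.InjOn x (Set.Icc 1 n)

/-- Parent-distance table: `fwdPD x i = i - max{ j | 1 ≤ j < i, x j < x i }` if such `j`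
exists, `0` otherwise. -/
def fwdPD (x : ℕ → ℤ) (i : ℕ) : ℕ :=
  if h : ((Finset.Ico 1 i).filter (fun j => x j < x i)).Nonempty then
    i - ((Finset.Ico 1 i).filter (fun j => x j < x i)).max' h
  else 0

/-- Reverse parent-distance table: `revPD n x i = min{ j | i < j ≤ n, x j < x i } - i` if
such `j` exists, `0` otherwise. -/
def revPD (n : ℕ) (x : ℕ → ℤ) (i : ℕ) : ℕ :=
  if h : ((Finset.Ioc i n).filter (fun j => x j < x i)).Nonempty then
    ((Finset.Ioc i n).filter (fun j => x j < x i)).min' h - i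
  else 0

/-- The swap `τ(x,i)`: exchanges positions `i` and `i+1`. -/
def swapSeq (x : ℕ → ℤ) (i : ℕ) : ℕ → ℤ :=
  fun j => if j = i then x (i + 1) else if j = i + 1 then x i else x j

/-- The parent-distance table of a sequence of length `n`, as a function on `Fin n`
(position `k : Fin n` corresponds to index `k+1 ∈ {1,…,n}`). -/
def PDvec (n : ℕ) (x : ℕ → ℤ) : Fin n → ℕ := fun k => fwdPD x (k.1 + 1)

/-- `NGat n x i` is the set of parent-distance tables obtained by a swap at position `i`
(`1 ≤ i ≤ n-1`) from some sequence `z` having the same Cartesian tree (i.e. the same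
parent-distance table) as `x`; it is empty for `i` out of range. -/
def NGat (n : ℕ) (x : ℕ → ℤ) (i : ℕ) : Set (Fin n → ℕ) :=
  {P | 1 ≤ i ∧ i + 1 ≤ n ∧
    ∃ z, IsSeq n z ∧ PDvec n z = PDvec n x ∧ P = PDvec n (swapSeq z i)}

/-- The neighborhood of (the Cartesian tree of) `x` in the swap graph. -/
def NG (n : ℕ) (x : ℕ → ℤ) : Set (Fin n → ℕ) := ⋃ i, NGat n x i

/-!
Equal Cartesian trees mean equal parent-distance tables, and `PD[k+1] = 1` holds exactly when
`x k < x (k+1)`. A swap at `i` reverses that comparison, so it flips whether `PD[i+1] = 1`, while a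
swap at `j ≥ i + 2` leaves the prefix up to `i + 1`, hence `PD[i+1]`, untouched. For `j = i + 1`
the conditions `PD[i+1] = 1`, `PD[i+2] = 1` and `PD[i+2] = 2`, before and after the two swaps,
constrain the relative order of the three values at positions `i, i+1, i+2` inconsistently.
Disjointness then turns `|NG(x)|` into the sum of the `|NG(x,i)|`.
-/

open Finset

lemma IsSeq.apply_ne {n : ℕ} {z : ℕ → ℤ} (hz : IsSeq n z) {a b : ℕ} (ha : 1 ≤ a) (hb : b ≤ n)
    (hab : a < b) : z a ≠ z b :=
  (Set.InjOn.ne_iff hz ⟨ha, by omega⟩ ⟨by omega, hb⟩).mpr hab.ne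

section fwdPD

variable {u v : ℕ → ℤ} {k m : ℕ}

lemma fwdPD_le : fwdPD u k ≤ k := by
  unfold fwdPD
  split_ifs <;> omega

lemma fwdPD_eq_sub_iff (hm : 1 ≤ m) (hmk : m < k) :
    fwdPD u k = k - m ↔ u m < u k ∧ ∀ j, m < j → j < k → ¬ u j < u k := by
  unfold fwdPD
  split_ifs with hS
  · have hlt := (mem_Ico.mp (mem_filter.mp (max'_mem _ hS)).1).2
    rw [tsub_right_inj hlt.le hmk.le, max'_eq_iff]
    simp only [mem_filter, mem_Ico]
    constructor
    · rintro ⟨⟨-, hmu⟩, hmax⟩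
      exact ⟨hmu, fun j hmj hjk hj => absurd (hmax j ⟨⟨by omega, hjk⟩, hj⟩) (by omega)⟩
    · rintro ⟨hmu, hnone⟩
      refine ⟨⟨⟨hm, hmk⟩, hmu⟩, fun j ⟨⟨_, hjk⟩, hj⟩ => ?_⟩
      by_contra! hmj
      exact hnone j hmj hjk hj
  · refine ⟨fun h => by omega, fun ⟨hmu, _⟩ => absurd ⟨m, ?_⟩ hS⟩
    exact mem_filter.mpr ⟨mem_Ico.mpr ⟨hm, hmk⟩, hmu⟩

lemma fwdPD_succ_eq_one_iff (hm : 1 ≤ m) : fwdPD u (m + 1) = 1 ↔ u m < u (m + 1) := by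
  have h := fwdPD_eq_sub_iff (u := u) (k := m + 1) hm (by omega)
  rw [Nat.add_sub_cancel_left] at h
  rw [h]
  exact and_iff_left fun j hmj hjk => absurd hjk (by omega)

lemma fwdPD_add_two_eq_two_iff (hm : 1 ≤ m) :
    fwdPD u (m + 2) = 2 ↔ u m < u (m + 2) ∧ ¬ u (m + 1) < u (m + 2) := by
  have h := fwdPD_eq_sub_iff (u := u) (k := m + 2) hm (by omega)
  rw [Nat.add_sub_cancel_left] at h
  rw [h]
  refine and_congr_right fun _ => ⟨fun h => h (m + 1) (by omega) (by omega), ?_⟩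
  intro h j hmj hjk
  obtain rfl : j = m + 1 := by omega
  exact h

lemma fwdPD_congr (h : ∀ j ≤ k, u j = v j) : fwdPD u k = fwdPD v k := by
  have hS : (Ico 1 k).filter (fun j => u j < u k) = (Ico 1 k).filter (fun j => v j < v k) :=
    filter_congr fun j hj => by rw [h j (mem_Ico.mp hj).2.le, h k le_rfl]
  simp only [fwdPD, hS]

end fwdPD

section swapSeq

variable {z : ℕ → ℤ} {i : ℕ}

@[simp]
lemma swapSeq_apply_left : swapSeq z i i = z (i + 1) := if_pos rfl

@[simp]
lemma swapSeq_apply_right : swapSeq z i (i + 1) = z i := by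
  simp [swapSeq]

lemma swapSeq_apply_of_ne {j : ℕ} (h₁ : j ≠ i) (h₂ : j ≠ i + 1) : swapSeq z i j = z j := by
  simp [swapSeq, h₁, h₂]

lemma fwdPD_swapSeq_of_lt {k : ℕ} (hk : k < i) : fwdPD (swapSeq z i) k = fwdPD z k :=
  fwdPD_congr fun _ hj => swapSeq_apply_of_ne (by omega) (by omega)

lemma fwdPD_swapSeq_succ_eq_one_iff (hi : 1 ≤ i) :
    fwdPD (swapSeq z i) (i + 1) = 1 ↔ z (i + 1) < z i := by
  rw [fwdPD_succ_eq_one_iff hi, swapSeq_apply_left, swapSeq_apply_right]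

end swapSeq

variable {n : ℕ}

lemma fwdPD_eq_of_PDvec_eq {u v : ℕ → ℤ} (h : PDvec n u = PDvec n v) {m : ℕ} (h₁ : 1 ≤ m)
    (h₂ : m ≤ n) : fwdPD u m = fwdPD v m := by
  simpa [PDvec, Nat.sub_add_cancel h₁] using congrFun h ⟨m - 1, by omega⟩

lemma PDvec_swapSeq_ne_of_succ_lt {z w : ℕ → ℤ} (hz : IsSeq n z) (hzw : PDvec n z = PDvec n w)
    {i j : ℕ} (hi : 1 ≤ i) (hij : i + 1 < j) (hj : j ≤ n) :
    PDvec n (swapSeq z i) ≠ PDvec n (swapSeq w j) := by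
  intro h
  have hPD : fwdPD (swapSeq z i) (i + 1) = fwdPD z (i + 1) := calc
    fwdPD (swapSeq z i) (i + 1) = fwdPD (swapSeq w j) (i + 1) :=
      fwdPD_eq_of_PDvec_eq h (by omega) (by omega)
    _ = fwdPD w (i + 1) := fwdPD_swapSeq_of_lt hij
    _ = fwdPD z (i + 1) := (fwdPD_eq_of_PDvec_eq hzw (by omega) (by omega)).symm
  have hflip := fwdPD_swapSeq_succ_eq_one_iff (z := z) hi
  rw [hPD, fwdPD_succ_eq_one_iff hi] at hflip
  have := hz.apply_ne hi (by omega : i + 1 ≤ n) (lt_add_one i)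
  omega

lemma PDvec_swapSeq_ne_succ {z w : ℕ → ℤ} (hz : IsSeq n z) (hw : IsSeq n w)
    (hzw : PDvec n z = PDvec n w) {i : ℕ} (hi : 1 ≤ i) (hn : i + 2 ≤ n) :
    PDvec n (swapSeq z i) ≠ PDvec n (swapSeq w (i + 1)) := by
  intro h
  have hi' : 1 ≤ i + 1 := by omega
  have e₁ := fwdPD_eq_of_PDvec_eq hzw hi' (by omega)
  have e₂ := fwdPD_eq_of_PDvec_eq hzw (m := i + 2) (by omega) hn
  have e₃ := fwdPD_eq_of_PDvec_eq h hi' (by omega)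
  have e₄ := fwdPD_eq_of_PDvec_eq h (m := i + 2) (by omega) hn
  have o₁ : z i < z (i + 1) ↔ w i < w (i + 1) := by
    rw [← fwdPD_succ_eq_one_iff hi, ← fwdPD_succ_eq_one_iff hi, e₁]
  have o₂ : z (i + 1) < z (i + 2) ↔ w (i + 1) < w (i + 2) := by
    rw [← fwdPD_succ_eq_one_iff hi', ← fwdPD_succ_eq_one_iff hi', e₂]
  have o₃ : z i < z (i + 2) ∧ ¬ z (i + 1) < z (i + 2) ↔
      w i < w (i + 2) ∧ ¬ w (i + 1) < w (i + 2) := by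
    rw [← fwdPD_add_two_eq_two_iff hi, ← fwdPD_add_two_eq_two_iff hi, e₂]
  have o₄ : z (i + 1) < z i ↔ w i < w (i + 2) := by
    rw [← fwdPD_swapSeq_succ_eq_one_iff hi, e₃, fwdPD_succ_eq_one_iff hi,
      swapSeq_apply_of_ne (by omega) (by omega), swapSeq_apply_left]
  have o₅ : z i < z (i + 2) ↔ w (i + 2) < w (i + 1) := by
    have := fwdPD_succ_eq_one_iff (u := swapSeq z i) hi'
    rw [e₄, fwdPD_succ_eq_one_iff hi', swapSeq_apply_left, swapSeq_apply_right,
      swapSeq_apply_right, swapSeq_apply_of_ne (by omega) (by omega)] at this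
    exact this.symm
  have o₆ : z (i + 1) < z (i + 2) ∧ ¬ z i < z (i + 2) ↔
      w i < w (i + 1) ∧ ¬ w (i + 2) < w (i + 1) := by
    have := fwdPD_add_two_eq_two_iff (u := swapSeq z i) hi
    rw [e₄, fwdPD_add_two_eq_two_iff hi] at this
    simpa [swapSeq_apply_of_ne (i := i) (j := i + 2) (by omega) (by omega),
      swapSeq_apply_of_ne (i := i + 1) (j := i) (by omega) (by omega)] using this.symm
  have := hz.apply_ne hi (by omega : i + 1 ≤ n) (lt_add_one i)
  have := hz.apply_ne hi hn (by omega : i < i + 2)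
  have := hz.apply_ne hi' hn (lt_add_one (i + 1))
  have := hw.apply_ne hi (by omega : i + 1 ≤ n) (lt_add_one i)
  have := hw.apply_ne hi hn (by omega : i < i + 2)
  have := hw.apply_ne hi' hn (lt_add_one (i + 1))
  omega

lemma disjoint_NGat (x : ℕ → ℤ) {i j : ℕ} (hij : i ≠ j) : Disjoint (NGat n x i) (NGat n x j) := by
  wlog hlt : i < j generalizing i j
  · exact (this hij.symm (by omega)).symm
  rw [Set.disjoint_left]
  rintro P ⟨hi, -, z, hz, hzx, rfl⟩ ⟨-, hj, w, hw, hwx, hP⟩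
  have hzw : PDvec n z = PDvec n w := hzx.trans hwx.symm
  rcases (Nat.succ_le_of_lt hlt).eq_or_lt with rfl | hlt'
  · exact PDvec_swapSeq_ne_succ hz hw hzw hi hj hP
  · exact PDvec_swapSeq_ne_of_succ_lt hz hzw hi hlt' (by omega) hP

lemma NGat_finite (x : ℕ → ℤ) (i : ℕ) : (NGat n x i).Finite :=
  (Set.Finite.pi fun _ : Fin n => Set.finite_Iic n).subset <| by
    rintro _ ⟨-, -, z, -, -, rfl⟩ k -
    exact fwdPD_le.trans k.2

lemma NG_eq_biUnion (x : ℕ → ℤ) : NG n x = ⋃ i ∈ (Icc 1 (n - 1) : Set ℕ), NGat n x i := by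
  ext P
  simp only [NG, Set.mem_iUnion, coe_Icc, Set.mem_Icc]
  exact ⟨fun ⟨i, hP⟩ => ⟨i, ⟨hP.1, by have := hP.2.1; omega⟩, hP⟩, fun ⟨i, _, hP⟩ => ⟨i, hP⟩⟩

theorem stmt11_general (n : ℕ) (x : ℕ → ℤ) :
    (∀ i j : ℕ, 1 ≤ i → i + 1 ≤ n → 1 ≤ j → j + 1 ≤ n → i ≠ j →
      NGat n x i ∩ NGat n x j = ∅) ∧
    (NG n x).ncard = ∑ i ∈ Finset.Icc 1 (n - 1), (NGat n x i).ncard := by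
  refine ⟨fun i j _ _ _ _ hij => (disjoint_NGat x hij).inter_eq, ?_⟩
  rw [NG_eq_biUnion, Set.Finite.ncard_biUnion (finite_toSet _) (fun i _ => NGat_finite x i)
    (fun i _ j _ hij => disjoint_NGat x hij), finsum_mem_coe_finset]

theorem stmt11 (n : ℕ) (x : ℕ → ℤ) (hx : IsSeq n x) :
    (∀ i j : ℕ, 1 ≤ i → i + 1 ≤ n → 1 ≤ j → j + 1 ≤ n → i ≠ j →
      NGat n x i ∩ NGat n x j = ∅) ∧
    (NG n x).ncard = ∑ i ∈ Finset.Icc 1 (n - 1), (NGat n x i).ncard :=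
  stmt11_general n x
end

section
/- Let x be a sequence of length n and let k ≥ 2 be the position of the minimum value of x. Then |NG(x,k−1)| = 1 + #{ j | k < j ≤ n and PD⃗_x[j] = j − k }. (The quantity #{ j | k < j ≤ n and PD⃗_x[j] = j − k } is exactly the length of the left branch of the right subtree of the Cartesian tree of x.) -/
lemma fwdPD_eq_zero (z : ℕ → ℤ) (i : ℕ) (h : ∀ j, 1 ≤ j → j < i → ¬ z j < z i) :
    fwdPD z i = 0 := by
  rw [fwdPD, dif_neg]
  rintro ⟨j, hj⟩
  simp only [Finset.mem_filter, Finset.mem_Ico] at hj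
  exact h j hj.1.1 hj.1.2 hj.2

lemma fwdPD_eq_parent (z : ℕ → ℤ) (i p : ℕ) (h1 : 1 ≤ p) (h2 : p < i)
    (h3 : z p < z i) (h4 : ∀ j, p < j → j < i → ¬ z j < z i) :
    fwdPD z i = i - p := by
  have hpm : p ∈ (Finset.Ico 1 i).filter (fun j => z j < z i) := by
    simp only [Finset.mem_filter, Finset.mem_Ico]; exact ⟨⟨h1, h2⟩, h3⟩
  have hne : ((Finset.Ico 1 i).filter (fun j => z j < z i)).Nonempty := ⟨p, hpm⟩
  rw [fwdPD, dif_pos hne]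
  congr 1
  have hmax := Finset.max'_mem _ hne
  simp only [Finset.mem_filter, Finset.mem_Ico] at hmax
  have hle : ((Finset.Ico 1 i).filter (fun j => z j < z i)).max' hne ≤ p := by
    by_contra hlt
    push_neg at hlt
    exact h4 _ hlt hmax.1.2 hmax.2
  have hge : p ≤ ((Finset.Ico 1 i).filter (fun j => z j < z i)).max' hne :=
    Finset.le_max' _ p hpm
  omega

lemma fwdPD_spec (z : ℕ → ℤ) (i : ℕ) (h : fwdPD z i ≠ 0) :
    1 ≤ i - fwdPD z i ∧ i - fwdPD z i < i ∧ z (i - fwdPD z i) < z i ∧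
      ∀ j, i - fwdPD z i < j → j < i → ¬ z j < z i := by
  by_cases hne : ((Finset.Ico 1 i).filter (fun j => z j < z i)).Nonempty
  · have heq : fwdPD z i = i - ((Finset.Ico 1 i).filter (fun j => z j < z i)).max' hne := by
      rw [fwdPD, dif_pos hne]
    have hmax := Finset.max'_mem _ hne
    simp only [Finset.mem_filter, Finset.mem_Ico] at hmax
    have hp : i - fwdPD z i = ((Finset.Ico 1 i).filter (fun j => z j < z i)).max' hne := by
      omega
    rw [hp]
    refine ⟨hmax.1.1, hmax.1.2, hmax.2, ?_⟩
    intro j hj1 hj2 hlt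
    have hmem : j ∈ (Finset.Ico 1 i).filter (fun j => z j < z i) := by
      simp only [Finset.mem_filter, Finset.mem_Ico]
      exact ⟨⟨by omega, hj2⟩, hlt⟩
    have := Finset.le_max' _ j hmem
    omega
  · rw [fwdPD, dif_neg hne] at h; exact absurd rfl h

lemma fwdPD_lt (z : ℕ → ℤ) (i : ℕ) : fwdPD z i < i ∨ fwdPD z i = 0 := by
  by_cases h : fwdPD z i = 0
  · exact Or.inr h
  · have := fwdPD_spec z i h; omega

lemma PDvec_eq_iff (n : ℕ) (z x : ℕ → ℤ) :
    PDvec n z = PDvec n x ↔ ∀ i, 1 ≤ i → i ≤ n → fwdPD z i = fwdPD x i := by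
  constructor
  · intro h i h1 h2
    have := congrFun h ⟨i - 1, by omega⟩
    simpa [PDvec, Nat.sub_add_cancel h1] using this
  · intro h
    funext j
    exact h (j.1 + 1) (by omega) (by omega)

lemma fwdPD_zero_spec (z : ℕ → ℤ) (i : ℕ) (h : fwdPD z i = 0) :
    ∀ j, 1 ≤ j → j < i → ¬ z j < z i := by
  intro j h1 h2 hlt
  have hmem : j ∈ (Finset.Ico 1 i).filter (fun j => z j < z i) := by
    simp only [Finset.mem_filter, Finset.mem_Ico]; exact ⟨⟨h1, h2⟩, hlt⟩
  have hne : ((Finset.Ico 1 i).filter (fun j => z j < z i)).Nonempty := ⟨j, hmem⟩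
  rw [fwdPD, dif_pos hne] at h
  have hmax := Finset.max'_mem _ hne
  simp only [Finset.mem_filter, Finset.mem_Ico] at hmax
  omega

section ctx

variable (n k : ℕ) (x : ℕ → ℤ)
variable (hk1 : 2 ≤ k) (hk2 : k ≤ n)
variable (hmin : ∀ j, 1 ≤ j → j ≤ n → j ≠ k → x k < x j)

include hk1 hk2 hmin in
/-- for `k < j ≤ n`, the parent of `j` in `x` exists and is `≥ k`. -/
lemma parent_ge_k : ∀ j, k < j → j ≤ n → fwdPD x j ≠ 0 ∧ k ≤ j - fwdPD x j := by
  intro j hkj hjn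
  have hkm : k ∈ (Finset.Ico 1 j).filter (fun m => x m < x j) := by
    simp only [Finset.mem_filter, Finset.mem_Ico]
    exact ⟨⟨by omega, hkj⟩, hmin j (by omega) hjn (by omega)⟩
  have hne : ((Finset.Ico 1 j).filter (fun m => x m < x j)).Nonempty := ⟨k, hkm⟩
  have heq : fwdPD x j = j - ((Finset.Ico 1 j).filter (fun m => x m < x j)).max' hne := by
    rw [fwdPD, dif_pos hne]
  have hge : k ≤ ((Finset.Ico 1 j).filter (fun m => x m < x j)).max' hne :=
    Finset.le_max' _ k hkm
  have hmax := Finset.max'_mem _ hne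
  simp only [Finset.mem_filter, Finset.mem_Ico] at hmax
  omega

include hk1 hk2 hmin in
lemma fwdPD_x_k : fwdPD x k = 0 := by
  apply fwdPD_eq_zero
  intro j h1 h2 hlt
  exact absurd (hmin j h1 (by omega) (by omega)) (not_lt.2 hlt.le)

variable (z : ℕ → ℤ) (hz : IsSeq n z)
variable (hpd : ∀ i, 1 ≤ i → i ≤ n → fwdPD z i = fwdPD x i)

include hk1 hk2 hmin hz hpd in
lemma pd_min : ∀ j, 1 ≤ j → j ≤ n → j ≠ k → z k < z j := by
  have key : ∀ j, j ≤ n → k < j → z k < z j := by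
    intro j
    induction j using Nat.strong_induction_on with
    | _ j ih =>
      intro hjn hkj
      obtain ⟨hne0, hge⟩ := parent_ge_k n k x hk1 hk2 hmin j hkj hjn
      have hpdz : fwdPD z j = fwdPD x j := hpd j (by omega) hjn
      have hspec := fwdPD_spec z j (by rw [hpdz]; exact hne0)
      set p := j - fwdPD z j with hp
      have hpk : k ≤ p := by omega
      rcases eq_or_lt_of_le hpk with h | h
      · rw [h]; exact hspec.2.2.1
      · exact lt_trans (ih p hspec.2.1 (by omega) h) hspec.2.2.1
  intro j h1 hjn hjk
  rcases lt_or_gt_of_ne hjk with h | h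
  · have hzk : fwdPD z k = 0 := by
      rw [hpd k (by omega) hk2]; exact fwdPD_x_k n k x hk1 hk2 hmin
    have := fwdPD_zero_spec z k hzk j h1 h
    have hne : z j ≠ z k := fun he => hjk (hz ⟨h1, hjn⟩ ⟨by omega, hk2⟩ he)
    omega
  · exact key j hjn h

include hk1 hk2 hmin hpd in
/-- spec for branch elements in `z`. -/
lemma pd_B_spec : ∀ i, k < i → i ≤ n → fwdPD x i = i - k →
    z k < z i ∧ ∀ m, k < m → m < i → ¬ z m < z i := by
  intro i hki hin hB
  have hpdz : fwdPD z i = i - k := by rw [hpd i (by omega) hin]; exact hB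
  have hne0 : fwdPD z i ≠ 0 := by omega
  have hspec := fwdPD_spec z i hne0
  have hp : i - fwdPD z i = k := by omega
  rw [hp] at hspec
  exact ⟨hspec.2.2.1, fun m h1 h2 => hspec.2.2.2 m h1 h2⟩

include hk1 hk2 hmin hz hpd in
lemma pd_chain : ∀ i i', k < i → i < i' → i' ≤ n →
    fwdPD x i' = i' - k → z i' < z i := by
  intro i i' h1 h2 h3 hB
  have hspec := pd_B_spec n k x hk1 hk2 hmin z hpd i' (by omega) h3 hB
  have hnlt := hspec.2 i h1 h2
  have hne : z i ≠ z i' := fun he => (by omega : i ≠ i') (hz ⟨by omega, by omega⟩ ⟨by omega, h3⟩ he)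
  omega

end ctx

set_option linter.unusedSectionVars false

lemma fwdPD_congr_s13 (y z : ℕ → ℤ) (i : ℕ) (h : ∀ j, j ≤ i → y j = z j) :
    fwdPD y i = fwdPD z i := by
  have hs : (Finset.Ico 1 i).filter (fun j => y j < y i) =
      (Finset.Ico 1 i).filter (fun j => z j < z i) := by
    apply Finset.filter_congr
    intro j hj
    simp only [Finset.mem_Ico] at hj
    rw [h j (by omega), h i (le_refl i)]
  rw [fwdPD, fwdPD, hs]

/-- the candidate parent-distance tables after the swap at `k-1`. -/
def Ttab (n k : ℕ) (x : ℕ → ℤ) (b : ℕ) : Fin n → ℕ := fun fi =>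
  if fi.1 + 1 = k - 1 then 0
  else if fi.1 + 1 = k then 1
  else if k < fi.1 + 1 ∧ fwdPD x (fi.1 + 1) = fi.1 + 1 - k ∧ b ≤ fi.1 + 1 then fi.1 + 1 - k + 1
  else fwdPD x (fi.1 + 1)

section swaps

variable (n k : ℕ) (x : ℕ → ℤ)
variable (hk1 : 2 ≤ k) (hk2 : k ≤ n)
variable (hmin : ∀ j, 1 ≤ j → j ≤ n → j ≠ k → x k < x j)
variable (z : ℕ → ℤ) (hz : IsSeq n z)
variable (hpd : ∀ i, 1 ≤ i → i ≤ n → fwdPD z i = fwdPD x i)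

include hk1 hk2 hmin hz hpd in
lemma swap_pd (b : ℕ)
    (hb : ∀ i, k < i → i ≤ n → fwdPD x i = i - k → (z (k-1) < z i ↔ i < b)) :
    PDvec n (swapSeq z (k - 1)) = Ttab n k x b := by
  have hzmin := pd_min n k x hk1 hk2 hmin z hz hpd
  set y := swapSeq z (k - 1) with hy
  have hyv : ∀ j, y j = if j = k - 1 then z k else if j = k then z (k - 1) else z j := by
    intro j
    rw [hy, swapSeq]
    have : k - 1 + 1 = k := by omega
    rw [this]
  funext fi
  set i := fi.1 + 1 with hi
  have hin : i ≤ n := by omega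
  have hi1 : 1 ≤ i := by omega
  show fwdPD y i = Ttab n k x b fi
  rcases lt_trichotomy i (k - 1) with hc | hc | hc
  · -- i < k - 1 : unchanged
    have h1 : fwdPD y i = fwdPD z i := by
      apply fwdPD_congr_s13
      intro j hj
      rw [hyv j, if_neg (by omega), if_neg (by omega)]
    rw [Ttab, if_neg (by omega), if_neg (by omega), if_neg (by omega)]
    rw [h1, hpd i hi1 hin]
  · -- i = k - 1 : new minimum here
    have h1 : fwdPD y i = 0 := by
      apply fwdPD_eq_zero
      intro j h1j h2j
      rw [hyv j, hyv i, if_neg (by omega), if_neg (by omega), if_pos (by omega)]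
      exact not_lt.2 (hzmin j h1j (by omega) (by omega)).le
    rw [Ttab, if_pos (by omega), h1]
  · -- i > k - 1
    rcases eq_or_lt_of_le (by omega : k ≤ i) with hik | hik
    · -- i = k
      have h1 : fwdPD y i = i - (k - 1) := by
        apply fwdPD_eq_parent y i (k - 1) (by omega) (by omega)
        · rw [hyv (k-1), hyv i, if_pos rfl, if_neg (by omega), if_pos (by omega)]
          exact hzmin (k-1) (by omega) (by omega) (by omega)
        · intro j hj1 hj2; omega
      rw [Ttab, if_neg (by omega), if_pos (by omega), h1]
      omega
    · -- i > k
      obtain ⟨hne0, hge⟩ := parent_ge_k n k x hk1 hk2 hmin i hik hin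
      have hpdz : fwdPD z i = fwdPD x i := hpd i hi1 hin
      have hspec := fwdPD_spec z i (by rw [hpdz]; exact hne0)
      set p := i - fwdPD z i with hp
      have hyi : y i = z i := by rw [hyv i, if_neg (by omega), if_neg (by omega)]
      rcases eq_or_lt_of_le (by omega : k ≤ p) with hpk | hpk
      · -- parent is k : branch element
        have hB : fwdPD x i = i - k := by omega
        have hiff := hb i hik hin hB
        by_cases hcase : z (k - 1) < z i
        · -- stays i - k
          have h1 : fwdPD y i = i - k := by
            apply fwdPD_eq_parent y i k (by omega) (by omega)
            · rw [hyv k, if_neg (by omega), if_pos rfl, hyi]; exact hcase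
            · intro j hj1 hj2
              rw [hyv j, if_neg (by omega), if_neg (by omega), hyi]
              exact hspec.2.2.2 j (by omega) hj2
          rw [Ttab, if_neg (by omega), if_neg (by omega),
            if_neg (by rw [← hi]; push_neg; intro _ _; omega)]
          rw [h1, hB]
        · -- becomes i - (k-1)
          have h1 : fwdPD y i = i - (k - 1) := by
            apply fwdPD_eq_parent y i (k - 1) (by omega) (by omega)
            · rw [hyv (k-1), if_pos rfl, hyi]
              have := hzmin i hi1 hin (by omega)
              omega
            · intro j hj1 hj2
              rw [hyv j, if_neg (by omega), hyi]
              by_cases hjk : j = k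
              · rw [if_pos hjk]
                have hne : z (k-1) ≠ z i := fun he =>
                  (by omega : k - 1 ≠ i) (hz ⟨by omega, by omega⟩ ⟨by omega, hin⟩ he)
                omega
              · rw [if_neg hjk]
                exact hspec.2.2.2 j (by omega) hj2
          rw [Ttab, if_neg (by omega), if_neg (by omega),
            if_pos (by rw [← hi]; exact ⟨hik, hB, by omega⟩)]
          rw [h1]
          omega
      · -- parent strictly above k : unchanged
        have h1 : fwdPD y i = i - p := by
          apply fwdPD_eq_parent y i p (by omega) (by omega)
          · rw [hyv p, if_neg (by omega), if_neg (by omega), hyi]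
            exact hspec.2.2.1
          · intro j hj1 hj2
            rw [hyv j, if_neg (by omega), if_neg (by omega), hyi]
            exact hspec.2.2.2 j hj1 hj2
        have hnB : ¬ fwdPD x i = i - k := by omega
        rw [Ttab, if_neg (by omega), if_neg (by omega),
          if_neg (by rw [← hi]; rintro ⟨_, h, _⟩; exact hnB h), ← hi]
        have h2 := hspec.1
        have h3 := hspec.2.1
        omega

end swaps

/-- value bound -/
def Mbd (n : ℕ) (x : ℕ → ℤ) : ℤ := (∑ j ∈ Finset.Icc 1 n, |x j|) + 1

/-- the witness sequence realizing split point `b`. -/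
def zcon (n k : ℕ) (x : ℕ → ℤ) (b : ℕ) : ℕ → ℤ := fun j =>
  if j ≤ k then 4 * Mbd n x * x j
  else if j < b then x j + (4 * Mbd n x * Mbd n x + Mbd n x + 1)
  else x j + (4 * Mbd n x * x k + Mbd n x + 1)

section construct

variable (n k : ℕ) (x : ℕ → ℤ) (hx : IsSeq n x)
variable (hk1 : 2 ≤ k) (hk2 : k ≤ n)
variable (hmin : ∀ j, 1 ≤ j → j ≤ n → j ≠ k → x k < x j)

include hx hk1 hk2 hmin in
lemma zcon_all (b : ℕ) (hbk : k < b)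
    (hbB : b = n + 1 ∨ (b ≤ n ∧ fwdPD x b = b - k)) :
    IsSeq n (zcon n k x b) ∧
    (∀ i, 1 ≤ i → i ≤ n → fwdPD (zcon n k x b) i = fwdPD x i) ∧
    (∀ i, k < i → i ≤ n → (zcon n k x b (k - 1) < zcon n k x b i ↔ i < b)) := by
  set M := Mbd n x with hM
  set N : ℤ := 4 * M with hN
  set zc := zcon n k x b with hzc
  have hM1 : 1 ≤ M := by
    rw [hM, Mbd]
    have : (0:ℤ) ≤ ∑ j ∈ Finset.Icc 1 n, |x j| :=
      Finset.sum_nonneg (fun j _ => abs_nonneg _)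
    omega
  have habs : ∀ j, 1 ≤ j → j ≤ n → -(M - 1) ≤ x j ∧ x j ≤ M - 1 := by
    intro j h1 h2
    have hm : |x j| ≤ M - 1 := by
      rw [hM, Mbd]
      have : |x j| ≤ ∑ j ∈ Finset.Icc 1 n, |x j| :=
        Finset.single_le_sum (f := fun j => |x j|) (fun _ _ => abs_nonneg _)
          (Finset.mem_Icc.2 ⟨h1, h2⟩)
      omega
    rw [abs_le] at hm
    omega
  -- zone values
  have hA : ∀ j, j ≤ k → zc j = N * x j := by
    intro j hj; rw [hzc, zcon, if_pos hj]
  have hE : ∀ j, k < j → j < b → zc j = x j + (N * M + M + 1) := by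
    intro j h1 h2; rw [hzc, zcon, if_neg (by omega), if_pos h2]
  have hD : ∀ j, b ≤ j → zc j = x j + (N * x k + M + 1) := by
    intro j h1; rw [hzc, zcon, if_neg (by omega), if_neg (by omega)]
  -- key comparisons
  have hxk_lt : ∀ j, 1 ≤ j → j ≤ n → j ≠ k → x k + 1 ≤ x j := fun j h1 h2 h3 =>
    (hmin j h1 h2 h3)
  have hmulle : ∀ a c : ℤ, a ≤ c → N * a ≤ N * c := by
    intro a c h
    exact mul_le_mul_of_nonneg_left h (by omega)
  -- A values bounded by N*(M-1) in absolute value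
  have hAbd : ∀ j, 1 ≤ j → j ≤ n → -(N * (M-1)) ≤ N * x j ∧ N * x j ≤ N * (M-1) := by
    intro j h1 h2
    obtain ⟨ha, hb'⟩ := habs j h1 h2
    constructor
    · have := hmulle _ _ ha; nlinarith
    · exact hmulle _ _ hb'
  have hNM : N * (M - 1) = 4 * M * M - 4 * M := by ring
  -- E above A
  have cEA : ∀ jA jE, 1 ≤ jA → jA ≤ n → jA ≤ k → k < jE → jE ≤ n → jE < b →
      zc jA < zc jE := by
    intro jA jE h1 h2 h3 h4 h5 h6
    rw [hA jA h3, hE jE h4 h6]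
    have := (hAbd jA h1 h2).2
    have := (habs jE (by omega) h5).1
    nlinarith
  -- E above D
  have cED : ∀ jD jE, b ≤ jD → jD ≤ n → k < jE → jE < b →
      zc jD < zc jE := by
    intro jD jE h1 h2 h3 h4
    rw [hD jD h1, hE jE h3 h4]
    have := (habs jD (by omega) h2).2
    have := (habs jE (by omega) (by omega)).1
    have := (habs k (by omega) (by omega)).2
    have h5 : N * x k ≤ N * (M - 1) := hmulle _ _ (by omega)
    nlinarith
  -- D above z k
  have cDk : ∀ jD, b ≤ jD → jD ≤ n → zc k < zc jD := by
    intro jD h1 h2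
    rw [hD jD h1, hA k (le_refl k)]
    have := (habs jD (by omega) h2).1
    nlinarith
  -- D below A values other than k
  have cDA : ∀ jD jA, b ≤ jD → jD ≤ n → 1 ≤ jA → jA ≤ n → jA ≤ k → jA ≠ k →
      zc jD < zc jA := by
    intro jD jA h1 h2 h3 h4 h5 h6
    rw [hD jD h1, hA jA h5]
    have := (habs jD (by omega) h2).2
    have h7 : x k + 1 ≤ x jA := hxk_lt jA h3 h4 h6
    have h8 : N * (x k + 1) ≤ N * x jA := hmulle _ _ h7
    nlinarith
  -- within-zone order preservation
  have cAA : ∀ j1 j2, j1 ≤ k → j2 ≤ k → (zc j1 < zc j2 ↔ x j1 < x j2) := by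
    intro j1 j2 h1 h2
    rw [hA j1 h1, hA j2 h2]
    exact mul_lt_mul_iff_right₀ (by omega)
  have cEE : ∀ j1 j2, k < j1 → j1 < b → k < j2 → j2 < b →
      (zc j1 < zc j2 ↔ x j1 < x j2) := by
    intro j1 j2 h1 h2 h3 h4
    rw [hE j1 h1 h2, hE j2 h3 h4]
    omega
  have cDD : ∀ j1 j2, b ≤ j1 → b ≤ j2 → (zc j1 < zc j2 ↔ x j1 < x j2) := by
    intro j1 j2 h1 h2
    rw [hD j1 h1, hD j2 h2]
    omega
  -- injectivity
  have hinj : IsSeq n zc := by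
    intro j1 hj1 j2 hj2 he
    simp only [Set.mem_Icc] at hj1 hj2
    by_contra hne
    have hxeq : x j1 ≠ x j2 := fun h => hne (hx (Set.mem_Icc.2 hj1) (Set.mem_Icc.2 hj2) h)
    rcases le_or_gt j1 k with z1A | z1
    · rcases le_or_gt j2 k with z2A | z2
      · rw [hA j1 z1A, hA j2 z2A] at he
        exact hxeq (mul_left_cancel₀ (by omega) he)
      · rcases lt_or_ge j2 b with z2E | z2D
        · exact absurd he (ne_of_lt (cEA j1 j2 hj1.1 hj1.2 z1A z2 hj2.2 z2E))
        · rcases eq_or_ne j1 k with h | h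
          · rw [h] at he
            exact absurd he (ne_of_lt (cDk j2 z2D hj2.2))
          · exact absurd he.symm (ne_of_lt (cDA j2 j1 z2D hj2.2 hj1.1 hj1.2 z1A h))
    · rcases lt_or_ge j1 b with z1E | z1D
      · rcases le_or_gt j2 k with z2A | z2
        · exact absurd he.symm (ne_of_lt (cEA j2 j1 hj2.1 hj2.2 z2A z1 hj1.2 z1E))
        · rcases lt_or_ge j2 b with z2E | z2D
          · rw [hE j1 z1 z1E, hE j2 z2 z2E] at he
            exact hxeq (by omega)
          · exact absurd he.symm (ne_of_lt (cED j2 j1 z2D hj2.2 z1 z1E))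
      · rcases le_or_gt j2 k with z2A | z2
        · rcases eq_or_ne j2 k with h | h
          · rw [h] at he
            exact absurd he.symm (ne_of_lt (cDk j1 z1D hj1.2))
          · exact absurd he (ne_of_lt (cDA j1 j2 z1D hj1.2 hj2.1 hj2.2 z2A h))
        · rcases lt_or_ge j2 b with z2E | z2D
          · exact absurd he (ne_of_lt (cED j1 j2 z1D hj1.2 z2 z2E))
          · rw [hD j1 z1D, hD j2 z2D] at he
            exact hxeq (by omega)
  -- parent-distance table preserved
  have hpdc : ∀ i, 1 ≤ i → i ≤ n → fwdPD zc i = fwdPD x i := by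
    intro i h1 h2
    by_cases h0 : fwdPD x i = 0
    · rw [h0]
      apply fwdPD_eq_zero
      intro j hj1 hj2 hlt
      have hik : i ≤ k := by
        by_contra hik
        exact (parent_ge_k n k x hk1 hk2 hmin i (by omega) h2).1 h0
      rw [cAA j i (by omega) hik] at hlt
      exact fwdPD_zero_spec x i h0 j hj1 hj2 hlt
    · obtain ⟨hp1, hp2, hp3, hp4⟩ := fwdPD_spec x i h0
      set p := i - fwdPD x i with hp
      have hgoal : fwdPD zc i = i - p := by
        apply fwdPD_eq_parent zc i p hp1 hp2
        · -- zc p < zc i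
          rcases le_or_gt i k with hik | hik
          · exact (cAA p i (by omega) (by omega)).2 hp3
          · have hge := (parent_ge_k n k x hk1 hk2 hmin i hik h2).2
            have hgep : k ≤ p := by omega
            rcases lt_or_ge i b with hiE | hiD
            · rcases eq_or_lt_of_le hgep with hpk | hpk
              · rw [← hpk]
                exact cEA k i (by omega) (by omega) le_rfl hik h2 hiE
              · exact (cEE p i hpk (by omega) hik hiE).2 hp3
            · rcases eq_or_lt_of_le hgep with hpk | hpk
              · rw [← hpk]
                exact cDk i hiD h2
              · have hpb : b ≤ p := by
                  by_contra hpb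
                  push_neg at hpb
                  have hbB' : b ≤ n ∧ fwdPD x b = b - k := by
                    rcases hbB with h | h
                    · omega
                    · exact h
                  obtain ⟨hq1, hq2, hq3, hq4⟩ := fwdPD_spec x b (by omega)
                  have hqk : b - fwdPD x b = k := by omega
                  rw [hqk] at hq3 hq4
                  have hpb' : ¬ x p < x b := hq4 p hpk hpb
                  have hbi : b < i := by
                    rcases eq_or_lt_of_le hiD with h | h
                    · exfalso
                      rw [h] at hbB'
                      omega
                    · exact h
                  have hbx : ¬ x b < x i := hp4 b (by omega) hbi
                  have hne1 : x i ≠ x b := fun h =>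
                    (by omega : i ≠ b) (hx (Set.mem_Icc.2 ⟨by omega, h2⟩)
                      (Set.mem_Icc.2 ⟨by omega, hbB'.1⟩) h)
                  have hne2 : x b ≠ x p := fun h =>
                    (by omega : b ≠ p) (hx (Set.mem_Icc.2 ⟨by omega, hbB'.1⟩)
                      (Set.mem_Icc.2 ⟨by omega, by omega⟩) h)
                  have h5 : x i < x b := lt_of_le_of_ne (not_lt.1 hbx) hne1
                  have h6 : x b < x p := lt_of_le_of_ne (not_lt.1 hpb') hne2
                  linarith
                exact (cDD p i hpb hiD).2 hp3
        · -- middle elements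
          intro m hm1 hm2 hltm
          rcases le_or_gt i k with hik | hik
          · rw [cAA m i (by omega) hik] at hltm
            exact hp4 m hm1 hm2 hltm
          · have hge := (parent_ge_k n k x hk1 hk2 hmin i hik h2).2
            have hmk : k < m := by omega
            rcases lt_or_ge i b with hiE | hiD
            · rw [cEE m i hmk (by omega) hik hiE] at hltm
              exact hp4 m hm1 hm2 hltm
            · rcases lt_or_ge m b with hmE | hmD
              · exact absurd hltm (not_lt.2 (cED i m hiD h2 hmk hmE).le)
              · rw [cDD m i hmD hiD] at hltm
                exact hp4 m hm1 hm2 hltm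
      omega
  -- the split property
  have hiff : ∀ i, k < i → i ≤ n → (zc (k - 1) < zc i ↔ i < b) := by
    intro i h1 h2
    rcases lt_or_ge i b with hE' | hD'
    · exact ⟨fun _ => hE', fun _ => cEA (k-1) i (by omega) (by omega) (by omega) h1 h2 hE'⟩
    · have hle : zc i ≤ zc (k-1) :=
        (cDA i (k-1) hD' h2 (by omega) (by omega) (by omega) (by omega)).le
      exact ⟨fun hlt => absurd hlt (not_lt.2 hle), fun hlt => absurd hlt (by omega)⟩
  exact ⟨hinj, hpdc, hiff⟩

end construct

theorem stmt13 (n k : ℕ) (x : ℕ → ℤ) (hx : IsSeq n x)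
    (hk1 : 2 ≤ k) (hk2 : k ≤ n)
    (hmin : ∀ j, 1 ≤ j → j ≤ n → j ≠ k → x k < x j) :
    (NGat n x (k - 1)).ncard =
      1 + ((Finset.Ioc k n).filter (fun j => fwdPD x j = j - k)).card := by
  classical
  set B := (Finset.Ioc k n).filter (fun j => fwdPD x j = j - k) with hB
  have hBn : ∀ b ∈ B, k < b ∧ b ≤ n ∧ fwdPD x b = b - k := by
    intro b hb
    simp only [hB, Finset.mem_filter, Finset.mem_Ioc] at hb
    exact ⟨hb.1.1, hb.1.2, hb.2⟩
  have hBmem : ∀ i, k < i → i ≤ n → fwdPD x i = i - k → i ∈ B := by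
    intro i h1 h2 h3
    simp only [hB, Finset.mem_filter, Finset.mem_Ioc]
    exact ⟨⟨h1, h2⟩, h3⟩
  have hset : NGat n x (k - 1) = Ttab n k x '' ↑(insert (n+1) B) := by
    ext P
    simp only [NGat, Set.mem_setOf_eq, Set.mem_image, Finset.coe_insert,
      Set.mem_insert_iff, Finset.mem_coe]
    constructor
    · rintro ⟨-, -, z, hz, hpdv, hP⟩
      have hpd : ∀ i, 1 ≤ i → i ≤ n → fwdPD z i = fwdPD x i := (PDvec_eq_iff n z x).1 hpdv
      by_cases hne : (B.filter (fun i => ¬ z (k-1) < z i)).Nonempty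
      · set b := (B.filter (fun i => ¬ z (k-1) < z i)).min' hne with hb
        have hbmem : b ∈ B.filter (fun i => ¬ z (k-1) < z i) := Finset.min'_mem _ hne
        have hbB : b ∈ B := (Finset.mem_filter.1 hbmem).1
        have hbnlt : ¬ z (k-1) < z b := (Finset.mem_filter.1 hbmem).2
        refine ⟨b, Or.inr hbB, ?_⟩
        rw [hP]
        refine (swap_pd n k x hk1 hk2 hmin z hz hpd b ?_).symm
        intro i hki hin hBi
        constructor
        · intro hlt
          by_contra hge
          push_neg at hge
          rcases eq_or_lt_of_le hge with h | h
          · rw [h] at hbnlt; exact hbnlt hlt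
          · exact hbnlt (lt_trans hlt
              (pd_chain n k x hk1 hk2 hmin z hz hpd b i (hBn b hbB).1 h hin hBi))
        · intro hib
          by_contra hnlt
          have hmem : i ∈ B.filter (fun i => ¬ z (k-1) < z i) :=
            Finset.mem_filter.2 ⟨hBmem i hki hin hBi, hnlt⟩
          have := Finset.min'_le _ i hmem
          omega
      · refine ⟨n+1, Or.inl rfl, ?_⟩
        rw [hP]
        refine (swap_pd n k x hk1 hk2 hmin z hz hpd (n+1) ?_).symm
        intro i hki hin hBi
        refine ⟨fun _ => by omega, fun _ => ?_⟩
        by_contra hnlt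
        have hmem : i ∈ B.filter (fun i => ¬ z (k-1) < z i) :=
          Finset.mem_filter.2 ⟨hBmem i hki hin hBi, hnlt⟩
        exact hne ⟨i, hmem⟩
    · rintro ⟨b, hbmem, hP⟩
      have hbk : k < b := by
        rcases hbmem with h | h
        · omega
        · exact (hBn b h).1
      have hbB' : b = n + 1 ∨ (b ≤ n ∧ fwdPD x b = b - k) := by
        rcases hbmem with h | h
        · exact Or.inl h
        · exact Or.inr ⟨(hBn b h).2.1, (hBn b h).2.2⟩
      obtain ⟨hinj, hpdc, hiff⟩ := zcon_all n k x hx hk1 hk2 hmin b hbk hbB'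
      refine ⟨by omega, by omega, zcon n k x b, hinj, (PDvec_eq_iff _ _ _).2 hpdc, ?_⟩
      rw [← hP]
      exact (swap_pd n k x hk1 hk2 hmin (zcon n k x b) hinj hpdc b
        (fun i h1 h2 _ => hiff i h1 h2)).symm
  have key : ∀ b1 b2, b1 ∈ insert (n+1) B → b2 ∈ insert (n+1) B → b1 < b2 →
      Ttab n k x b1 ≠ Ttab n k x b2 := by
    intro b1 b2 h1 h2 hlt heq
    have hb1B : b1 ∈ B := by
      rcases Finset.mem_insert.1 h1 with h | h
      · exfalso
        rcases Finset.mem_insert.1 h2 with h' | h'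
        · omega
        · have := (hBn b2 h').2.1; omega
      · exact h
    obtain ⟨hbk, hbn, hfd⟩ := hBn b1 hb1B
    have hfin : b1 - 1 < n := by omega
    have hth := congrFun heq ⟨b1 - 1, hfin⟩
    have hval : ((⟨b1 - 1, hfin⟩ : Fin n) : ℕ) = b1 - 1 := rfl
    simp only [Ttab, hval] at hth
    rw [(by omega : b1 - 1 + 1 = b1)] at hth
    rw [if_neg (by omega), if_neg (by omega), if_pos ⟨hbk, hfd, le_refl b1⟩,
      if_neg (by omega), if_neg (by omega),
      if_neg (by rintro ⟨-, -, h⟩; omega)] at hth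
    rw [hfd] at hth
    omega
  have hinjOn : Set.InjOn (Ttab n k x) ↑(insert (n+1) B) := by
    intro b1 h1 b2 h2 heq
    by_contra hne
    rcases lt_or_gt_of_ne hne with h | h
    · exact key b1 b2 (Finset.mem_coe.1 h1) (Finset.mem_coe.1 h2) h heq
    · exact key b2 b1 (Finset.mem_coe.1 h2) (Finset.mem_coe.1 h1) h heq.symm
  rw [hset, Set.ncard_image_of_injOn hinjOn, Set.ncard_coe_finset,
    Finset.card_insert_of_notMem (by intro h; have := (hBn _ h).2.1; omega)]
  omega
end
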